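/- arXiv:1406.5084 — 2 statements merged into one kernel-verified Lean document; each statement's English description precedes it below -/
import Mathlib

section
/- The number of break divisors on a connected graph G equals the number of spanning trees of G. -/
/-- A finite multigraph: vertices, edges, and an (arbitrarily oriented)
pair of endpoints for each edge. -/
structure Multigraph where
  V : Type
  E : Type
  [fV : Fintype V]
  [fE : Fintype E]
  [dV : DecidableEq V]
  [dE : DecidableEq E]
  ends : E → V × V

attribute [instance] Multigraph.fV Multigraph.fE Multigraph.dV Multigraph.dE

namespace Multigraph

variable (G : Multigraph)

/-- No loop edges. -/
def Loopless : Prop := ∀ e : G.E, (G.ends e).1 ≠ (G.ends e).2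

/-- Adjacency via some edge. -/
def Adj (x y : G.V) : Prop := ∃ e : G.E, G.ends e = (x, y) ∨ G.ends e = (y, x)

/-- The multigraph is connected. -/
def Connected : Prop := Nonempty G.V ∧ ∀ x y : G.V, Relation.ReflTransGen G.Adj x y

/-- The degree of a divisor (a divisor is a function `V → ℤ`). -/
def deg (D : G.V → ℤ) : ℤ := ∑ v, D v

/-- The Laplacian divisor `Δ f` of `f : V → ℤ`. -/
def lap (f : G.V → ℤ) : G.V → ℤ := fun v =>
  ∑ e : G.E, ((if (G.ends e).1 = v then f v - f (G.ends e).2 else 0) +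
              (if (G.ends e).2 = v then f v - f (G.ends e).1 else 0))

/-- Linear equivalence of divisors. -/
def LinEquiv (D D' : G.V → ℤ) : Prop := ∃ f : G.V → ℤ, D - D' = G.lap f

/-- `x` and `y` are connected using only edges from `S`. -/
def ConnectsVia (S : Finset G.E) (x y : G.V) : Prop :=
  Relation.ReflTransGen
    (fun a b => ∃ e ∈ S, G.ends e = (a, b) ∨ G.ends e = (b, a)) x y

/-- A spanning tree, as an edge set: it connects all vertices and has
`#V - 1` edges. -/
def IsSpanningTree (T : Finset G.E) : Prop :=
  (∀ x y : G.V, G.ConnectsVia T x y) ∧ T.card + 1 = Fintype.card G.V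

/-- `D` is a `T`-break divisor: one chip on an endpoint of each edge outside `T`. -/
def IsTBreak (T : Finset G.E) (D : G.V → ℤ) : Prop :=
  ∃ ch : G.E → G.V,
    (∀ e ∉ T, ch e = (G.ends e).1 ∨ ch e = (G.ends e).2) ∧
    ∀ v, D v = ((Finset.univ.filter (fun e => e ∉ T ∧ ch e = v)).card : ℤ)

/-- `D` is a break divisor. -/
def IsBreak (D : G.V → ℤ) : Prop := ∃ T, G.IsSpanningTree T ∧ G.IsTBreak T D

/-- The genus `#E - #V + 1`. -/
def genus : ℤ := (Fintype.card G.E : ℤ) - Fintype.card G.V + 1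

end Multigraph

/-!
Break divisors are characterised by genus bounds: for a connected edge set `R`, a divisor `D`
is a break divisor iff `deg D = g(R)` and `∑ v ∈ A, D v ≥ g(R[A])` for every nonempty vertex
set `A`, where `g(R[A]) = #(edges of R inside A) - #A + 1` is `inducedGenus R A`. Necessity
holds because the chips on `A` include one for every non-tree edge inside `A`, while a spanning
tree has at most `#A - 1` edges inside `A`.

Sufficiency and the count both go by deletion–contraction of a non-bridge edge `e = uv`.
A genus-bounded `D` either stays genus-bounded on `R - e` after removing a chip at `u`, or has a
tight set `A ∋ u` with `v ∉ A`. Divisors of the first kind correspond to those of `R - e`.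
Those of the second kind inject into the divisors of `G / e` by pushforward, since tight sets
pin down how the chips on the merged vertex split between `u` and `v`; and they exhaust them,
because a lift of a break divisor of `G / e` can be pushed along `e` from `u` to `v` until it
acquires a tight set. Spanning trees split in the same way according to whether they contain
`e`, so both counts satisfy the same recursion.
-/

lemma Nat.card_subtype_eq_card_and_add_card_and_not {α : Type*} (p q : α → Prop)
    [Finite {a // p a}] :
    Nat.card {a // p a} = Nat.card {a // p a ∧ q a} + Nat.card {a // p a ∧ ¬q a} := by
  classical
  rw [← Nat.card_congr (Equiv.sumCompl fun x : {a // p a} => q x), Nat.card_sum,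
    Nat.card_congr (Equiv.subtypeSubtypeEquivSubtypeInter p q),
    Nat.card_congr (Equiv.subtypeSubtypeEquivSubtypeInter p fun a => ¬q a)]

namespace Multigraph

open Finset

variable {G : Multigraph} {R S : Finset G.E} {D : G.V → ℤ} {e : G.E} {u v : G.V}

section Connectivity

variable (G) in
def ConnectsAll (S : Finset G.E) : Prop := ∀ x y, G.ConnectsVia S x y

lemma ConnectsVia.mono {S' : Finset G.E} (h : S ⊆ S') {x y : G.V}
    (hxy : G.ConnectsVia S x y) : G.ConnectsVia S' x y :=
  Relation.ReflTransGen.mono (fun _ _ ⟨e, he, hab⟩ => ⟨e, h he, hab⟩) x y hxy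

lemma ConnectsVia.symm {x y : G.V} (hxy : G.ConnectsVia S x y) : G.ConnectsVia S y x := by
  induction hxy with
  | refl => exact .refl
  | tail _ hbc ih =>
    obtain ⟨e, he, hab⟩ := hbc
    exact ih.head ⟨e, he, hab.symm⟩

lemma ConnectsVia.of_mem (he : e ∈ S) : G.ConnectsVia S (G.ends e).1 (G.ends e).2 :=
  .single ⟨e, he, .inl rfl⟩

lemma ConnectsVia.filter_not_loop {x y : G.V} (h : G.ConnectsVia S x y) :
    G.ConnectsVia (S.filter fun f => (G.ends f).1 ≠ (G.ends f).2) x y := by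
  induction h with
  | refl => exact .refl
  | @tail b c _ hbc ih =>
    obtain ⟨f, hf, hends⟩ := hbc
    by_cases hloop : (G.ends f).1 = (G.ends f).2
    · obtain rfl : b = c := by rcases hends with h | h <;> simp_all
      exact ih
    · exact ih.tail ⟨f, mem_filter.2 ⟨hf, hloop⟩, hends⟩

lemma ConnectsVia.erase_loop (hl : (G.ends e).1 = (G.ends e).2) {x y : G.V}
    (h : G.ConnectsVia S x y) : G.ConnectsVia (S.erase e) x y :=
  h.filter_not_loop.mono fun f hf => by
    obtain ⟨hfS, hf⟩ := mem_filter.1 hf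
    exact mem_erase.2 ⟨by rintro rfl; exact hf hl, hfS⟩

lemma ConnectsVia.exists_not_loop {x y : G.V} (h : G.ConnectsVia S x y) (hxy : x ≠ y) :
    ∃ f ∈ S, (G.ends f).1 ≠ (G.ends f).2 := by
  induction h with
  | refl => exact absurd rfl hxy
  | @tail b c _ hbc ih =>
    by_cases hb : b = c
    · exact ih (hb ▸ hxy)
    · obtain ⟨f, hf, hends⟩ := hbc
      refine ⟨f, hf, ?_⟩
      rcases hends with h | h <;> rw [h] <;> tauto

lemma ConnectsAll.mono {S' : Finset G.E} (h : S ⊆ S') (hS : G.ConnectsAll S) :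
    G.ConnectsAll S' :=
  fun x y => (hS x y).mono h

lemma connectsAll_univ (hG : G.Connected) : G.ConnectsAll univ :=
  fun x y => Relation.ReflTransGen.mono (fun _ _ ⟨e, hab⟩ => ⟨e, mem_univ e, hab⟩) x y (hG.2 x y)

end Connectivity

section Contraction

variable {W : Type} [Fintype W] [DecidableEq W]

variable (G) in
abbrev map (π : G.V → W) : Multigraph where
  V := W
  E := G.E
  ends f := (π (G.ends f).1, π (G.ends f).2)

lemma ConnectsVia.map (π : G.V → W) {x y : G.V} (h : G.ConnectsVia S x y) :
    (G.map π).ConnectsVia S (π x) (π y) :=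
  Relation.ReflTransGen.lift π
    (fun _ _ ⟨e, he, hab⟩ => ⟨e, he, by rcases hab with h | h <;> simp [h]⟩) x y h

lemma ConnectsAll.map {π : G.V → W} (hπ : Function.Surjective π) (h : G.ConnectsAll S) :
    (G.map π).ConnectsAll S := by
  intro a b
  obtain ⟨x, rfl⟩ := hπ a
  obtain ⟨y, rfl⟩ := hπ b
  exact (h x y).map π

variable (G) in
def collapse (A : Finset G.V) (x : G.V) : Option {x // x ∉ A} :=
  if h : x ∈ A then none else some ⟨x, h⟩

variable (G) in
/-- The contraction of `A` to the new vertex `none`; no edge is deleted, so the edges inside `A`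
become loops. -/
abbrev contract (A : Finset G.V) : Multigraph := G.map (G.collapse A)

variable {A : Finset G.V}

@[simp] lemma collapse_eq_none {x : G.V} : G.collapse A x = none ↔ x ∈ A := by
  unfold collapse
  split_ifs with h <;> simp [h]

lemma collapse_of_notMem {x : G.V} (hx : x ∉ A) : G.collapse A x = some ⟨x, hx⟩ :=
  dif_neg hx

lemma collapse_pair_left : G.collapse {u, v} u = none :=
  collapse_eq_none.2 (mem_insert_self u {v})

lemma collapse_pair_right : G.collapse {u, v} v = none :=
  collapse_eq_none.2 (mem_insert_of_mem (mem_singleton_self v))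

lemma collapse_surjective (hA : A.Nonempty) : Function.Surjective (G.collapse A) := by
  rintro (_ | ⟨x, hx⟩)
  · obtain ⟨a, ha⟩ := hA
    exact ⟨a, collapse_eq_none.2 ha⟩
  · exact ⟨x, collapse_of_notMem hx⟩

lemma card_contract (A : Finset G.V) :
    Fintype.card (G.contract A).V + #A = Fintype.card G.V + 1 := by
  have := card_le_univ A
  simp only [Fintype.card_option, Fintype.card_subtype_compl, Fintype.card_coe]
  omega

lemma card_contract_pair (huv : u ≠ v) :
    Fintype.card (G.contract {u, v}).V + 1 = Fintype.card G.V := by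
  have := card_contract (G := G) {u, v}
  rw [card_pair huv] at this
  omega

lemma connectsVia_of_collapse_eq (he : G.ends e = (u, v)) (heS : e ∈ S) {x y : G.V}
    (h : G.collapse {u, v} x = G.collapse {u, v} y) : G.ConnectsVia S x y := by
  have hu : ∀ z ∈ ({u, v} : Finset G.V), G.ConnectsVia S u z := by
    have huv : G.ConnectsVia S u v := by simpa [he] using ConnectsVia.of_mem heS
    simp only [mem_insert, mem_singleton]
    rintro z (rfl | rfl)
    exacts [.refl, huv]
  by_cases hx : x ∈ ({u, v} : Finset G.V)
  · have hy : y ∈ ({u, v} : Finset G.V) := collapse_eq_none.1 (h ▸ collapse_eq_none.2 hx)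
    exact (hu x hx).symm.trans (hu y hy)
  · have hy : y ∉ ({u, v} : Finset G.V) := fun hy =>
      hx (collapse_eq_none.1 (h ▸ collapse_eq_none.2 hy))
    rw [collapse_of_notMem hx, collapse_of_notMem hy] at h
    cases h
    exact .refl

lemma ConnectsVia.of_contract (he : G.ends e = (u, v)) {a b : (G.contract {u, v}).V}
    (h : (G.contract {u, v}).ConnectsVia S a b) {x y : G.V} (hx : G.collapse {u, v} x = a)
    (hy : G.collapse {u, v} y = b) : G.ConnectsVia (insert e S) x y := by
  induction h generalizing y with
  | refl => exact connectsVia_of_collapse_eq he (mem_insert_self e S) (hx.trans hy.symm)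
  | tail _ hbc ih =>
    obtain ⟨f, hf, hends⟩ := hbc
    have hf' : G.ConnectsVia (insert e S) (G.ends f).1 (G.ends f).2 :=
      .of_mem (mem_insert_of_mem hf)
    rcases hends with h | h <;> simp only [Prod.mk.injEq] at h
    · exact (ih h.1).trans (hf'.trans
        (connectsVia_of_collapse_eq he (mem_insert_self e S) (h.2.trans hy.symm)))
    · exact (ih h.2).trans (hf'.symm.trans
        (connectsVia_of_collapse_eq he (mem_insert_self e S) (h.1.trans hy.symm)))

lemma ConnectsAll.contract (h : G.ConnectsAll S) (he : G.ends e = (u, v)) :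
    (G.contract {u, v}).ConnectsAll (S.erase e) := fun a b =>
  ((h.map (collapse_surjective (insert_nonempty u {v}))) a b).erase_loop
    (by simp [he, collapse_pair_left, collapse_pair_right])

end Contraction

section SpanningTrees

lemma ConnectsAll.exists_not_loop (h : G.ConnectsAll S) (hV : 1 < Fintype.card G.V) :
    ∃ f ∈ S, ∃ u v, G.ends f = (u, v) ∧ u ≠ v := by
  obtain ⟨x, y, hxy⟩ := Fintype.exists_pair_of_one_lt_card hV
  obtain ⟨f, hf, huv⟩ := (h x y).exists_not_loop hxy
  exact ⟨f, hf, _, _, rfl, huv⟩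

theorem ConnectsAll.card_le (h : G.ConnectsAll S) : Fintype.card G.V ≤ #S + 1 := by
  induction hn : #S using Nat.strong_induction_on generalizing G with
  | _ n ih =>
    by_cases hV : Fintype.card G.V ≤ 1
    · omega
    obtain ⟨f, hf, u, v, he, huv⟩ := h.exists_not_loop (by omega)
    have := ih _ (hn ▸ card_erase_lt_of_mem hf) (h.contract he) rfl
    have := card_contract_pair huv
    have := card_erase_add_one hf
    omega

lemma IsSpanningTree.not_loop (hT : G.IsSpanningTree S) (he : e ∈ S) :
    (G.ends e).1 ≠ (G.ends e).2 := fun hl => by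
  have := ConnectsAll.card_le fun x y => (hT.1 x y).erase_loop hl
  have := card_erase_add_one he
  have := hT.2
  omega

lemma isSpanningTree_insert_iff (he : G.ends e = (u, v)) (huv : u ≠ v) (heS : e ∉ S) :
    G.IsSpanningTree (insert e S) ↔ (G.contract {u, v}).IsSpanningTree S := by
  have hV := card_contract_pair (G := G) huv
  rw [IsSpanningTree, IsSpanningTree, card_insert_of_notMem heS]
  constructor
  · rintro ⟨hconn, hcard⟩
    refine ⟨?_, by omega⟩
    have := ConnectsAll.contract hconn he
    rwa [erase_insert heS] at this
  · rintro ⟨hconn, hcard⟩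
    exact ⟨fun x y => (hconn _ _).of_contract he rfl rfl, by omega⟩

theorem ConnectsAll.exists_isSpanningTree [Nonempty G.V] (h : G.ConnectsAll R) :
    ∃ T ⊆ R, G.IsSpanningTree T := by
  induction hn : #R using Nat.strong_induction_on generalizing G with
  | _ n ih =>
    by_cases hV : Fintype.card G.V ≤ 1
    · refine ⟨∅, empty_subset R, fun x y => ?_, ?_⟩
      · rw [Fintype.card_le_one_iff.1 hV x y]
        exact .refl
      · have := Fintype.card_pos (α := G.V)
        rw [card_empty]
        omega
    obtain ⟨f, hf, u, v, he, huv⟩ := h.exists_not_loop (by omega)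
    have : Nonempty (G.contract {u, v}).V := ⟨none⟩
    obtain ⟨T, hTR, hT⟩ := ih _ (hn ▸ card_erase_lt_of_mem hf) (h.contract he) rfl
    have hfT : f ∉ T := fun hfT => notMem_erase f R (hTR hfT)
    exact ⟨insert f T, insert_subset hf (hTR.trans (erase_subset f R)),
      (isSpanningTree_insert_iff he huv hfT).2 hT⟩

lemma IsSpanningTree.card_filter_lt (hT : G.IsSpanningTree S) {A : Finset G.V}
    (hA : A.Nonempty) : #(S.filter fun f => (G.ends f).1 ∈ A ∧ (G.ends f).2 ∈ A) < #A := by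
  have hS : (G.contract A).ConnectsAll
      (S.filter fun f : G.E => ¬((G.ends f).1 ∈ A ∧ (G.ends f).2 ∈ A)) := fun a b =>
    (((ConnectsAll.map (collapse_surjective hA) hT.1) a b).filter_not_loop).mono fun f hf => by
      simp only [mem_filter] at hf ⊢
      exact ⟨hf.1, fun hin => hf.2 (by simp [collapse_eq_none.2 hin.1, collapse_eq_none.2 hin.2])⟩
  have := hS.card_le
  have := card_contract (G := G) A
  have : #(S.filter fun f => (G.ends f).1 ∈ A ∧ (G.ends f).2 ∈ A) +
      #(S.filter fun f => ¬((G.ends f).1 ∈ A ∧ (G.ends f).2 ∈ A)) = #S :=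
    card_filter_add_card_filter_not _
  have := hT.2
  omega

end SpanningTrees

section Divisors

variable {α V W : Type*}

def chipDivisor [DecidableEq V] (S : Finset α) (ch : α → V) (v : V) : ℤ := #(S.filter (ch · = v))

lemma sum_chipDivisor [DecidableEq V] (S : Finset α) (ch : α → V) (A : Finset V) :
    ∑ v ∈ A, chipDivisor S ch v = #(S.filter (ch · ∈ A)) := by
  rw [card_eq_sum_card_fiberwise (s := S.filter (ch · ∈ A)) (t := A) (f := ch)
    fun a ha => (mem_filter.1 ha).2]
  push_cast
  refine sum_congr rfl fun v hv => ?_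
  rw [chipDivisor, filter_filter, filter_congr fun a _ => and_iff_right_of_imp fun h => h ▸ hv]

lemma chipDivisor_congr [DecidableEq V] {S : Finset α} {ch ch' : α → V}
    (h : ∀ a ∈ S, ch a = ch' a) : chipDivisor S ch = chipDivisor S ch' := by
  ext v
  rw [chipDivisor, chipDivisor, filter_congr fun a ha => by rw [h a ha]]

lemma chipDivisor_insert_update [DecidableEq α] [DecidableEq V] {S : Finset α} {a : α}
    (ha : a ∉ S) (ch : α → V) (x : V) :
    chipDivisor (insert a S) (Function.update ch a x) = chipDivisor S ch + Pi.single x 1 := by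
  have hS : chipDivisor S (Function.update ch a x) = chipDivisor S ch :=
    chipDivisor_congr fun b hb => Function.update_of_ne (ne_of_mem_of_not_mem hb ha) _ _
  ext v
  rw [← hS, Pi.add_apply, chipDivisor, filter_insert, Function.update_self, Pi.single_apply]
  by_cases hxv : x = v
  · simp [hxv, ha, chipDivisor]
  · simp [hxv, Ne.symm hxv, chipDivisor]

def pushforward [Fintype V] [DecidableEq W] (π : V → W) : (V → ℤ) →+ (W → ℤ) where
  toFun D w := ∑ x with π x = w, D x
  map_zero' := by ext; simp
  map_add' D D' := by ext; simp [sum_add_distrib]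

lemma sum_pushforward [Fintype V] [DecidableEq W] (π : V → W) (D : V → ℤ) (B : Finset W) :
    ∑ w ∈ B, pushforward π D w = ∑ x with π x ∈ B, D x := by
  rw [← sum_fiberwise_of_maps_to (g := π) (t := B) fun x hx => (mem_filter.1 hx).2]
  refine sum_congr rfl fun w hw => ?_
  simp only [pushforward, AddMonoidHom.coe_mk, ZeroHom.coe_mk, filter_filter]
  rw [filter_congr fun x _ => and_iff_right_of_imp fun h => h ▸ hw]

lemma pushforward_single [Fintype V] [DecidableEq V] [DecidableEq W] (π : V → W) (x : V)
    (c : ℤ) : pushforward π (Pi.single x c) = Pi.single (π x) c := by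
  ext w
  change ∑ y with π y = w, Pi.single x c y = _
  rw [sum_pi_single']
  simp [Pi.single_apply, eq_comm]

lemma pushforward_chipDivisor [Fintype V] [DecidableEq V] [DecidableEq W] (π : V → W)
    (S : Finset α) (ch : α → V) : pushforward π (chipDivisor S ch) = chipDivisor S (π ∘ ch) := by
  ext w
  have := sum_chipDivisor S ch (univ.filter (π · = w))
  simp only [mem_filter, mem_univ, true_and] at this
  exact this

end Divisors

section BreakDivisors

variable (G) in
def IsBreakOn (R : Finset G.E) (D : G.V → ℤ) : Prop :=
  ∃ T ⊆ R, G.IsSpanningTree T ∧ ∃ ch : G.E → G.V,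
    (∀ f ∈ R \ T, ch f = (G.ends f).1 ∨ ch f = (G.ends f).2) ∧ D = chipDivisor (R \ T) ch

lemma isBreak_iff_isBreakOn_univ : G.IsBreak D ↔ G.IsBreakOn univ D := by
  have key : ∀ (T : Finset G.E) (ch : G.E → G.V) v,
      chipDivisor (univ \ T) ch v = #(univ.filter fun e => e ∉ T ∧ ch e = v) := by
    intro T ch v
    simp [chipDivisor, sdiff_eq_filter, filter_filter]
  simp only [IsBreak, IsTBreak, IsBreakOn, subset_univ, true_and, mem_sdiff, mem_univ, funext_iff,
    key]

lemma IsBreakOn.add_single (he : G.ends e = (u, v)) (heR : e ∈ R) {x : G.V}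
    (hx : x = u ∨ x = v) (h : G.IsBreakOn (R.erase e) D) :
    G.IsBreakOn R (D + Pi.single x 1) := by
  obtain ⟨T, hTR, hT, ch, hch, rfl⟩ := h
  have heT : e ∉ T := fun heT => notMem_erase e R (hTR heT)
  have hRT : R \ T = insert e (R.erase e \ T) := by
    ext f
    by_cases hf : f = e <;> simp [hf, heR, heT]
  refine ⟨T, hTR.trans (erase_subset e R), hT, Function.update ch e x, fun f hf => ?_, ?_⟩
  · by_cases hfe : f = e
    · subst hfe
      simpa [he] using hx
    · rw [Function.update_of_ne hfe]
      exact hch f (by simp_all)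
  · rw [hRT, chipDivisor_insert_update (by simp)]

theorem IsBreakOn.exists_lift (he : G.ends e = (u, v)) (huv : u ≠ v) (heR : e ∈ R)
    {Db : (G.contract {u, v}).V → ℤ} (h : (G.contract {u, v}).IsBreakOn (R.erase e) Db) :
    ∃ D, G.IsBreakOn R D ∧ pushforward (G.collapse {u, v}) D = Db := by
  obtain ⟨T, hTR, hT, ch, hch, rfl⟩ := h
  have heT : e ∉ T := fun heT => notMem_erase e R (hTR heT)
  have hRT : R \ insert e T = R.erase e \ T := by
    ext f
    by_cases hf : f = e <;> simp [hf]
  let ch' : G.E → G.V := fun f =>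
    if G.collapse {u, v} (G.ends f).1 = ch f then (G.ends f).1 else (G.ends f).2
  refine ⟨chipDivisor (R \ insert e T) ch', ⟨insert e T,
    insert_subset heR (hTR.trans (erase_subset e R)), (isSpanningTree_insert_iff he huv heT).2 hT,
    ch', fun f _ => by unfold ch'; split_ifs <;> simp, rfl⟩, ?_⟩
  rw [pushforward_chipDivisor, hRT]
  refine chipDivisor_congr fun f hf => ?_
  simp only [Function.comp, ch']
  split_ifs with h
  · exact h
  · exact ((hch f hf).resolve_left (Ne.symm h)).symm

end BreakDivisors

section GenusBounds

variable (G) in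
def inducedGenus (R : Finset G.E) (A : Finset G.V) : ℤ :=
  #(R.filter fun f => (G.ends f).1 ∈ A ∧ (G.ends f).2 ∈ A) - #A + 1

variable (G) in
def IsGenusBounded (R : Finset G.E) (D : G.V → ℤ) : Prop :=
  ∑ v, D v = G.inducedGenus R univ ∧
    ∀ A : Finset G.V, A.Nonempty → G.inducedGenus R A ≤ ∑ v ∈ A, D v

lemma inducedGenus_univ (R : Finset G.E) :
    G.inducedGenus R univ = #R - Fintype.card G.V + 1 := by
  simp [inducedGenus]

theorem IsBreakOn.isGenusBounded (h : G.IsBreakOn R D) : G.IsGenusBounded R D := by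
  obtain ⟨T, hTR, hT, ch, hch, rfl⟩ := h
  refine ⟨?_, fun A hA => ?_⟩
  · have := sum_chipDivisor (R \ T) ch univ
    simp only [mem_univ, filter_true] at this
    rw [this, inducedGenus_univ, card_sdiff_of_subset hTR, Nat.cast_sub (card_le_card hTR),
      ← hT.2]
    push_cast
    ring
  · rw [sum_chipDivisor, inducedGenus]
    have hsub : ((R \ T).filter fun f => (G.ends f).1 ∈ A ∧ (G.ends f).2 ∈ A) ⊆
        (R \ T).filter (ch · ∈ A) :=
      monotone_filter_right _ fun f hf hin => by rcases hch f hf with h | h <;> simp [h, hin]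
    have hsplit : (R.filter fun f => (G.ends f).1 ∈ A ∧ (G.ends f).2 ∈ A) ⊆
        ((R \ T).filter fun f => (G.ends f).1 ∈ A ∧ (G.ends f).2 ∈ A) ∪
          (T.filter fun f => (G.ends f).1 ∈ A ∧ (G.ends f).2 ∈ A) := fun f hf => by
      by_cases hfT : f ∈ T <;> simp_all
    have := (card_le_card hsplit).trans (card_union_le _ _)
    have := card_le_card hsub
    have := hT.card_filter_lt hA
    omega

lemma pushforward_collapse_none (A : Finset G.V) (D : G.V → ℤ) :
    pushforward (G.collapse A) D none = ∑ x ∈ A, D x := by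
  simp only [pushforward, AddMonoidHom.coe_mk, ZeroHom.coe_mk, collapse_eq_none,
    filter_mem_eq_inter, univ_inter]

lemma pushforward_collapse_some {A : Finset G.V} (D : G.V → ℤ) (x : {x // x ∉ A}) :
    pushforward (G.collapse A) D (some x) = D x := by
  have : univ.filter (G.collapse A · = some x) = {x.1} := by
    ext y
    by_cases hy : y ∈ A
    · simp [collapse_eq_none.2 hy, ne_of_mem_of_not_mem hy x.2]
    · simp [collapse_of_notMem hy, Subtype.ext_iff]
  simp [pushforward, this]

lemma card_preimage_collapse_pair (huv : u ≠ v) (B : Finset (G.contract {u, v}).V) :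
    (#(univ.filter (G.collapse {u, v} · ∈ B)) : ℤ) = #B + if none ∈ B then 1 else 0 := by
  have := sum_pushforward (G.collapse {u, v}) 1 B
  simp only [Pi.one_apply, sum_const, nsmul_eq_mul, mul_one] at this
  rw [← this, ← sum_pi_single' none 1 B, card_eq_sum_ones, Nat.cast_sum, ← sum_add_distrib]
  refine sum_congr rfl fun w _ => ?_
  cases w with
  | none => simp [pushforward_collapse_none, card_pair huv]
  | some x => simp [pushforward_collapse_some]

lemma inducedGenus_erase (he : G.ends e = (u, v)) (heR : e ∈ R) (A : Finset G.V) :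
    G.inducedGenus (R.erase e) A = G.inducedGenus R A - if u ∈ A ∧ v ∈ A then 1 else 0 := by
  simp only [inducedGenus, filter_erase]
  split_ifs with h
  · have he' : e ∈ R.filter fun f => (G.ends f).1 ∈ A ∧ (G.ends f).2 ∈ A := by simp [heR, he, h]
    rw [card_erase_of_mem he', Nat.cast_sub (card_pos.2 ⟨e, he'⟩)]
    ring
  · rw [erase_eq_of_notMem (by simp [he, h])]
    ring

lemma inducedGenus_contract (he : G.ends e = (u, v)) (huv : u ≠ v) (heR : e ∈ R)
    (B : Finset (G.contract {u, v}).V) :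
    (G.contract {u, v}).inducedGenus (R.erase e) B =
      G.inducedGenus R (univ.filter (G.collapse {u, v} · ∈ B)) := by
  have := inducedGenus_erase he heR (univ.filter (G.collapse {u, v} · ∈ B))
  have hcard := card_preimage_collapse_pair huv B
  simp only [inducedGenus, mem_filter, mem_univ, true_and, collapse_pair_left,
    collapse_pair_right, and_self] at this hcard ⊢
  split_ifs at this hcard <;> linarith

lemma IsGenusBounded.nonneg (h : G.IsGenusBounded R D) (x : G.V) : 0 ≤ D x := by
  have := h.2 {x} (singleton_nonempty x)
  simp only [inducedGenus, sum_singleton, card_singleton, Nat.cast_one] at this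
  omega

lemma IsGenusBounded.add_single (he : G.ends e = (u, v)) (heR : e ∈ R) {x : G.V}
    (hx : x = u ∨ x = v) (h : G.IsGenusBounded (R.erase e) D) :
    G.IsGenusBounded R (D + Pi.single x 1) := by
  refine ⟨?_, fun A hA => ?_⟩
  · simp [sum_add_distrib, h.1, inducedGenus_erase he heR]
  · have hA := h.2 A hA
    have hx : (if u ∈ A ∧ v ∈ A then 1 else 0 : ℤ) ≤ if x ∈ A then 1 else 0 := by
      rcases hx with rfl | rfl <;> split_ifs <;> simp_all
    rw [inducedGenus_erase he heR] at hA
    simp only [Pi.add_apply, sum_add_distrib, sum_pi_single']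
    linarith

lemma IsGenusBounded.sub_single (he : G.ends e = (u, v)) (heR : e ∈ R)
    (h : G.IsGenusBounded R D)
    (hlt : ∀ A : Finset G.V, u ∈ A → v ∉ A → G.inducedGenus R A < ∑ x ∈ A, D x) :
    G.IsGenusBounded (R.erase e) (D - Pi.single u 1) := by
  refine ⟨?_, fun A hA => ?_⟩
  · simp [sum_sub_distrib, h.1, inducedGenus_erase he heR]
  · rw [inducedGenus_erase he heR]
    simp only [Pi.sub_apply, sum_sub_distrib, sum_pi_single']
    have := h.2 A hA
    by_cases huA : u ∈ A
    · by_cases hvA : v ∈ A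
      · simp [huA, hvA]
        linarith
      · have := hlt A huA hvA
        simp [huA, hvA]
        linarith
    · simp [huA]
      linarith

theorem IsGenusBounded.contract (he : G.ends e = (u, v)) (huv : u ≠ v) (heR : e ∈ R)
    (h : G.IsGenusBounded R D) :
    (G.contract {u, v}).IsGenusBounded (R.erase e) (pushforward (G.collapse {u, v}) D) := by
  refine ⟨?_, fun B hB => ?_⟩
  · rw [sum_pushforward, inducedGenus_contract he huv heR]
    simpa using h.1
  · rw [sum_pushforward, inducedGenus_contract he huv heR]
    obtain ⟨w, hw⟩ := hB
    obtain ⟨x, rfl⟩ := collapse_surjective (insert_nonempty u {v}) w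
    exact h.2 _ ⟨x, by simpa using hw⟩

end GenusBounds

section Characterization

lemma IsGenusBounded.le_of_not_sub_single (he : G.ends e = (u, v)) (heR : e ∈ R)
    (h : G.IsGenusBounded R D) (hn : ¬G.IsGenusBounded (R.erase e) (D - Pi.single u 1))
    {D' : G.V → ℤ} (h' : G.IsGenusBounded R D') (hoff : ∀ x, x ≠ u → x ≠ v → D x = D' x) :
    D u ≤ D' u := by
  obtain ⟨A, huA, hvA, htight⟩ : ∃ A : Finset G.V, u ∈ A ∧ v ∉ A ∧
      ∑ x ∈ A, D x ≤ G.inducedGenus R A := by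
    by_contra! hlt
    exact hn (h.sub_single he heR hlt)
  have hdiff : ∑ x ∈ A, D' x - ∑ x ∈ A, D x = D' u - D u := by
    rw [← sum_sub_distrib]
    refine sum_eq_single_of_mem u huA fun x hxA hxu => ?_
    rw [hoff x hxu (ne_of_mem_of_not_mem hxA hvA), sub_self]
  linarith [h'.2 A ⟨u, huA⟩]

theorem IsGenusBounded.eq_of_pushforward_eq (he : G.ends e = (u, v)) (huv : u ≠ v)
    (heR : e ∈ R) {D' : G.V → ℤ} (h : G.IsGenusBounded R D) (h' : G.IsGenusBounded R D')
    (hn : ¬G.IsGenusBounded (R.erase e) (D - Pi.single u 1))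
    (hn' : ¬G.IsGenusBounded (R.erase e) (D' - Pi.single u 1))
    (hpush : pushforward (G.collapse {u, v}) D = pushforward (G.collapse {u, v}) D') :
    D = D' := by
  have hoff : ∀ x, x ≠ u → x ≠ v → D x = D' x := fun x hxu hxv => by
    have hx : x ∉ ({u, v} : Finset G.V) := by simp [hxu, hxv]
    simpa only [pushforward_collapse_some] using congrFun hpush (some ⟨x, hx⟩)
  have hpair : D u + D v = D' u + D' v := by
    simpa only [pushforward_collapse_none, sum_pair huv] using congrFun hpush none
  have hu := le_antisymm (h.le_of_not_sub_single he heR hn h' hoff)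
    (h'.le_of_not_sub_single he heR hn' h fun x hxu hxv => (hoff x hxu hxv).symm)
  funext x
  by_cases hxu : x = u
  · rw [hxu, hu]
  by_cases hxv : x = v
  · rw [hxv]
    linarith
  exact hoff x hxu hxv

theorem IsBreakOn.exists_pushforward_eq_not_sub_single (he : G.ends e = (u, v)) (huv : u ≠ v)
    (heR : e ∈ R) (hsuff : ∀ D', G.IsGenusBounded (R.erase e) D' → G.IsBreakOn (R.erase e) D')
    (h : G.IsBreakOn R D) :
    ∃ D₁, G.IsBreakOn R D₁ ∧ ¬G.IsGenusBounded (R.erase e) (D₁ - Pi.single u 1) ∧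
      pushforward (G.collapse {u, v}) D₁ = pushforward (G.collapse {u, v}) D := by
  induction hn : (D u).toNat using Nat.strong_induction_on generalizing D with
  | _ n ih =>
    by_cases hC : G.IsGenusBounded (R.erase e) (D - Pi.single u 1)
    · -- Move the chip at `u` across `e` to `v`: the pushforward stays, `D u` drops by one.
      have hDu := hC.nonneg u
      simp only [Pi.sub_apply, Pi.single_eq_same] at hDu
      obtain ⟨D₁, hD₁, hn₁, hpush⟩ := ih _ (by simp [← hn, huv.symm]; omega)
        ((hsuff _ hC).add_single he heR (.inr rfl)) rfl
      refine ⟨D₁, hD₁, hn₁, hpush.trans ?_⟩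
      simp [pushforward_single, collapse_pair_left, collapse_pair_right]
    · exact ⟨D, h, hC, rfl⟩

theorem IsSpanningTree.isBreakOn_zero (hR : G.IsSpanningTree R) : G.IsBreakOn R 0 :=
  ⟨R, subset_rfl, hR, fun f => (G.ends f).1, fun f _ => .inl rfl, by ext; simp [chipDivisor]⟩

lemma IsGenusBounded.eq_zero_of_isSpanningTree (hR : G.IsSpanningTree R)
    (h : G.IsGenusBounded R D) : D = 0 := by
  have hdeg : ∑ x, D x = 0 := by
    rw [h.1, inducedGenus_univ, ← hR.2]
    push_cast
    ring
  funext x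
  exact (sum_eq_zero_iff_of_nonneg fun x _ => h.nonneg x).1 hdeg x (mem_univ x)

lemma ConnectsAll.isSpanningTree_or_exists_erase [Nonempty G.V] (hR : G.ConnectsAll R) :
    G.IsSpanningTree R ∨ ∃ e ∈ R, G.ConnectsAll (R.erase e) := by
  obtain ⟨T, hTR, hT⟩ := hR.exists_isSpanningTree
  by_cases hRT : R ⊆ T
  · exact .inl (subset_antisymm hTR hRT ▸ hT)
  · obtain ⟨e, heR, heT⟩ := not_subset.1 hRT
    exact .inr ⟨e, heR, ConnectsAll.mono (subset_erase.2 ⟨hTR, heT⟩) hT.1⟩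

theorem IsGenusBounded.isBreakOn [Nonempty G.V] (hR : G.ConnectsAll R)
    (h : G.IsGenusBounded R D) : G.IsBreakOn R D := by
  induction hn : #R using Nat.strong_induction_on generalizing G R D with
  | _ n ih =>
    rcases hR.isSpanningTree_or_exists_erase with hT | ⟨e, heR, hR'⟩
    · exact h.eq_zero_of_isSpanningTree hT ▸ hT.isBreakOn_zero
    obtain ⟨⟨u, v⟩, he⟩ : ∃ p, G.ends e = p := ⟨_, rfl⟩
    have hlt : #(R.erase e) < n := hn ▸ card_erase_lt_of_mem heR
    by_cases hC : G.IsGenusBounded (R.erase e) (D - Pi.single u 1)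
    · simpa using (ih _ hlt hR' hC rfl).add_single he heR (.inl rfl)
    have huv : u ≠ v := by
      rintro rfl
      exact hC (h.sub_single he heR fun A huA hvA => absurd huA hvA)
    have : Nonempty (G.contract {u, v}).V := ⟨none⟩
    obtain ⟨D₀, hD₀, hpush₀⟩ :=
      (ih _ hlt (hR.contract he) (h.contract he huv heR) rfl).exists_lift he huv heR
    obtain ⟨D₁, hD₁, hn₁, hpush₁⟩ := hD₀.exists_pushforward_eq_not_sub_single he huv heR
      fun D' hD' => ih _ hlt hR' hD' rfl
    rwa [IsGenusBounded.eq_of_pushforward_eq he huv heR hD₁.isGenusBounded h hn₁ hC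
      (hpush₁.trans hpush₀)] at hD₁

theorem isBreakOn_iff_isGenusBounded [Nonempty G.V] (hR : G.ConnectsAll R) :
    G.IsBreakOn R D ↔ G.IsGenusBounded R D :=
  ⟨IsBreakOn.isGenusBounded, fun h => h.isBreakOn hR⟩

end Characterization

section Counting

instance finite_isGenusBounded : Finite {D // G.IsGenusBounded R D} :=
  Set.Finite.to_subtype <| (Set.finite_Icc 0 fun _ => G.inducedGenus R univ).subset
    fun D (hD : G.IsGenusBounded R D) =>
      ⟨hD.nonneg, fun x => hD.1 ▸ single_le_sum (fun y _ => hD.nonneg y) (mem_univ x)⟩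

lemma card_isGenusBounded_of_isSpanningTree (hR : G.IsSpanningTree R) :
    Nat.card {D // G.IsGenusBounded R D} = 1 :=
  Nat.card_eq_one_iff_exists.2 ⟨⟨0, hR.isBreakOn_zero.isGenusBounded⟩,
    fun D => Subtype.ext (D.2.eq_zero_of_isSpanningTree hR)⟩

lemma card_isSpanningTree_of_isSpanningTree (hR : G.IsSpanningTree R) :
    Nat.card {T // T ⊆ R ∧ G.IsSpanningTree T} = 1 :=
  Nat.card_eq_one_iff_exists.2 ⟨⟨R, subset_rfl, hR⟩, fun T => Subtype.ext <|
    eq_of_subset_of_card_le T.2.1 (show #R ≤ #T.1 by have := T.2.2.2; have := hR.2; omega)⟩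

lemma card_isGenusBounded_and_sub_single (he : G.ends e = (u, v)) (heR : e ∈ R) :
    Nat.card {D // G.IsGenusBounded R D ∧ G.IsGenusBounded (R.erase e) (D - Pi.single u 1)} =
      Nat.card {D // G.IsGenusBounded (R.erase e) D} :=
  Nat.card_congr
    { toFun D := ⟨D.1 - Pi.single u 1, D.2.2⟩
      invFun D := ⟨D.1 + Pi.single u 1, D.2.add_single he heR (.inl rfl), by simpa using D.2⟩
      left_inv D := by simp
      right_inv D := by simp }

lemma card_isGenusBounded_and_not_sub_single [Nonempty G.V] (hR : G.ConnectsAll R)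
    (hR' : G.ConnectsAll (R.erase e)) (he : G.ends e = (u, v)) (huv : u ≠ v) (heR : e ∈ R) :
    Nat.card {D // G.IsGenusBounded R D ∧ ¬G.IsGenusBounded (R.erase e) (D - Pi.single u 1)} =
      Nat.card {D // (G.contract {u, v}).IsGenusBounded (R.erase e) D} := by
  have : Nonempty (G.contract {u, v}).V := ⟨none⟩
  refine Nat.card_eq_of_bijective (fun D => ⟨_, D.2.1.contract he huv heR⟩)
    ⟨fun D D' h => ?_, ?_⟩
  · exact Subtype.ext (D.2.1.eq_of_pushforward_eq he huv heR D'.2.1 D.2.2 D'.2.2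
      (congrArg Subtype.val h))
  · rintro ⟨Db, hDb⟩
    obtain ⟨D₀, hD₀, hpush₀⟩ := (hDb.isBreakOn (hR.contract he)).exists_lift he huv heR
    obtain ⟨D₁, hD₁, hn₁, hpush₁⟩ := hD₀.exists_pushforward_eq_not_sub_single he huv heR
      fun D' hD' => hD'.isBreakOn hR'
    exact ⟨⟨D₁, hD₁.isGenusBounded, hn₁⟩, Subtype.ext (hpush₁.trans hpush₀)⟩

lemma isEmpty_isGenusBounded_and_not_sub_single (he : G.ends e = (u, u)) (heR : e ∈ R) :
    IsEmpty {D // G.IsGenusBounded R D ∧ ¬G.IsGenusBounded (R.erase e) (D - Pi.single u 1)} :=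
  ⟨fun D => D.2.2 (D.2.1.sub_single he heR fun _ huA hvA => absurd huA hvA)⟩

lemma card_isSpanningTree_and_notMem :
    Nat.card {T // (T ⊆ R ∧ G.IsSpanningTree T) ∧ e ∉ T} =
      Nat.card {T // T ⊆ R.erase e ∧ G.IsSpanningTree T} :=
  Nat.card_congr <| Equiv.subtypeEquivRight fun T => by rw [subset_erase]; tauto

lemma card_isSpanningTree_and_mem (he : G.ends e = (u, v)) (huv : u ≠ v) (heR : e ∈ R) :
    Nat.card {T // (T ⊆ R ∧ G.IsSpanningTree T) ∧ e ∈ T} =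
      Nat.card {T // T ⊆ R.erase e ∧ (G.contract {u, v}).IsSpanningTree T} :=
  Nat.card_congr
    { toFun T := ⟨T.1.erase e, erase_subset_erase e T.2.1.1,
        (isSpanningTree_insert_iff he huv (notMem_erase e T)).1
          (by rw [insert_erase T.2.2]; exact T.2.1.2)⟩
      invFun T := ⟨insert e T.1, ⟨insert_subset heR (T.2.1.trans (erase_subset e R)),
        (isSpanningTree_insert_iff he huv fun h => notMem_erase e R (T.2.1 h)).2 T.2.2⟩,
        mem_insert_self e T.1⟩
      left_inv T := Subtype.ext (insert_erase T.2.2)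
      right_inv T := Subtype.ext (erase_insert fun h => notMem_erase e R (T.2.1 h)) }

lemma isEmpty_isSpanningTree_and_mem (he : G.ends e = (u, u)) :
    IsEmpty {T // (T ⊆ R ∧ G.IsSpanningTree T) ∧ e ∈ T} :=
  ⟨fun T => T.2.1.2.not_loop T.2.2 (by simp [he])⟩

theorem card_isGenusBounded_eq_card_isSpanningTree [Nonempty G.V] (hR : G.ConnectsAll R) :
    Nat.card {D // G.IsGenusBounded R D} = Nat.card {T // T ⊆ R ∧ G.IsSpanningTree T} := by
  induction hn : #R using Nat.strong_induction_on generalizing G R with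
  | _ n ih =>
    rcases hR.isSpanningTree_or_exists_erase with hT | ⟨e, heR, hR'⟩
    · rw [card_isGenusBounded_of_isSpanningTree hT, card_isSpanningTree_of_isSpanningTree hT]
    obtain ⟨⟨u, v⟩, he⟩ : ∃ p, G.ends e = p := ⟨_, rfl⟩
    have hlt : #(R.erase e) < n := hn ▸ card_erase_lt_of_mem heR
    rw [Nat.card_subtype_eq_card_and_add_card_and_not (G.IsGenusBounded R)
        fun D => G.IsGenusBounded (R.erase e) (D - Pi.single u 1),
      Nat.card_subtype_eq_card_and_add_card_and_not (fun T => T ⊆ R ∧ G.IsSpanningTree T) (e ∉ ·),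
      card_isGenusBounded_and_sub_single he heR, card_isSpanningTree_and_notMem,
      ih _ hlt hR' rfl]
    congr 1
    simp only [not_not]
    by_cases huv : u = v
    · subst huv
      have := isEmpty_isGenusBounded_and_not_sub_single he heR
      have := isEmpty_isSpanningTree_and_mem (R := R) he
      simp only [Nat.card_of_isEmpty]
    · have : Nonempty (G.contract {u, v}).V := ⟨none⟩
      rw [card_isGenusBounded_and_not_sub_single hR hR' he huv heR,
        card_isSpanningTree_and_mem he huv heR, ih _ hlt (hR.contract he) rfl]

end Counting

theorem card_break_eq_card_spanning_trees_general (G : Multigraph) (hG : G.Connected) :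
    Nat.card {D : G.V → ℤ // G.IsBreak D} =
      Nat.card {T : Finset G.E // G.IsSpanningTree T} := by
  have hR := connectsAll_univ hG
  have := hG.1
  calc Nat.card {D // G.IsBreak D}
      _ = Nat.card {D // G.IsGenusBounded univ D} := Nat.card_congr <| Equiv.subtypeEquivRight
        fun D => isBreak_iff_isBreakOn_univ.trans (isBreakOn_iff_isGenusBounded hR)
      _ = Nat.card {T // T ⊆ univ ∧ G.IsSpanningTree T} :=
        card_isGenusBounded_eq_card_isSpanningTree hR
      _ = Nat.card {T // G.IsSpanningTree T} :=
        Nat.card_congr <| Equiv.subtypeEquivRight fun T => and_iff_right (subset_univ T)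

/-- the number of break divisors equals the number of
spanning trees. -/
theorem card_break_eq_card_spanning_trees (G : Multigraph) (hG : G.Connected)
    (hl : G.Loopless) :
    Nat.card {D : G.V → ℤ // G.IsBreak D} =
      Nat.card {T : Finset G.E // G.IsSpanningTree T} :=
  card_break_eq_card_spanning_trees_general G hG

end Multigraph
end

section
/- If G is a connected graph with at least one spanning tree T and D is a T-break divisor, then for every vertex subset A ⊆ V(G) spanning a connected induced subgraph H, the degree of D restricted to A is at least the genus of H (number of edges of H minus number of vertices of H plus 1). -/
namespace Multigraph

/-- `x` and `y` are connected inside the induced subgraph on `A`. -/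
def ConnectsViaInduced (G : Multigraph) (A : Finset G.V) (x y : G.V) : Prop :=
  Relation.ReflTransGen
    (fun a b => ∃ e : G.E, (G.ends e = (a, b) ∨ G.ends e = (b, a)) ∧
      (G.ends e).1 ∈ A ∧ (G.ends e).2 ∈ A) x y

/-- The edge set of the induced subgraph on `A`. -/
def inducedEdges (G : Multigraph) (A : Finset G.V) : Finset G.E :=
  Finset.univ.filter (fun e => (G.ends e).1 ∈ A ∧ (G.ends e).2 ∈ A)

/-! The edges of `T` with both ends in `A` form a forest on `A`, so there are at most `#A - 1` of
them: deleting them from `T` leaves every vertex joined to `A`, i.e. at most `#A` components on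
`#V` vertices, which needs at least `#V - #A` edges. Every remaining edge of `H` lies outside `T`
and carries a chip of `D` on one of its endpoints, both of which are in `A`. -/

section

variable {G : Multigraph}

theorem ConnectsVia.reachable_fromEdgeSet {S : Finset G.E} {F : Set (Sym2 G.V)}
    (hSF : ∀ e ∈ S, s((G.ends e).1, (G.ends e).2) ∈ F) {x y : G.V}
    (h : G.ConnectsVia S x y) : (SimpleGraph.fromEdgeSet F).Reachable x y := by
  rw [SimpleGraph.reachable_fromEdgeSet_eq_reflTransGen_toRel]
  refine Relation.ReflTransGen.mono (fun a b ⟨e, he, hab⟩ => ?_) x y h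
  rcases hab with hab | hab
  · simpa [hab] using hSF e he
  · simpa [hab, Sym2.eq_swap] using hSF e he

theorem card_le_card_add_card_of_forall_connectsVia {S : Finset G.E} {A : Finset G.V}
    (hA : A.Nonempty) (hS : ∀ x, ∃ a ∈ A, G.ConnectsVia S x a) :
    Fintype.card G.V ≤ S.card + A.card := by
  obtain ⟨a₀, ha₀⟩ := hA
  -- the simple graph of `S` plus a star on `A`: connected, with at most `#S + #A - 1` edges
  set F : Finset (Sym2 G.V) := S.image (fun e => s((G.ends e).1, (G.ends e).2)) ∪
    (A.erase a₀).image (fun a => s(a₀, a))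
  set H := SimpleGraph.fromEdgeSet (F : Set (Sym2 G.V))
  have hSF : ∀ e ∈ S, s((G.ends e).1, (G.ends e).2) ∈ (F : Set (Sym2 G.V)) := fun e he =>
    Finset.mem_union_left _ (Finset.mem_image_of_mem (fun e => s((G.ends e).1, (G.ends e).2)) he)
  have hreach : ∀ x, H.Reachable a₀ x := by
    intro x
    obtain ⟨a, ha, hxa⟩ := hS x
    have hxa : H.Reachable x a := hxa.reachable_fromEdgeSet hSF
    refine SimpleGraph.Reachable.trans ?_ hxa.symm
    obtain rfl | hne := eq_or_ne a₀ a
    · rfl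
    refine ((SimpleGraph.fromEdgeSet_adj _).2 ⟨?_, hne⟩).reachable
    exact Finset.mem_union_right _ (Finset.mem_image_of_mem _ (Finset.mem_erase.2 ⟨hne.symm, ha⟩))
  have hH : H.Connected := H.connected_iff_exists_forall_reachable.2 ⟨a₀, hreach⟩
  have hcard : Nat.card H.edgeSet ≤ F.card := by
    rw [SimpleGraph.edgeSet_fromEdgeSet]
    exact (Nat.card_mono F.finite_toSet Set.sdiff_subset).trans_eq (by simp)
  have hF : F.card ≤ S.card + (A.card - 1) := by
    grw [Finset.card_union_le, Finset.card_image_le, Finset.card_image_le,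
      Finset.card_erase_of_mem ha₀]
  have hV := hH.card_vert_le_card_edgeSet_add_one
  rw [Nat.card_eq_fintype_card] at hV
  have hApos := A.card_pos.2 ⟨a₀, ha₀⟩
  omega

theorem exists_mem_connectsVia_sdiff_inducedEdges {T : Finset G.E} {A : Finset G.V}
    {x y : G.V} (hy : y ∈ A) (h : G.ConnectsVia T x y) :
    ∃ a ∈ A, G.ConnectsVia (T \ G.inducedEdges A) x a := by
  induction h using Relation.ReflTransGen.head_induction_on with
  | refl => exact ⟨y, hy, .refl⟩
  | @head x b hstep _ ih =>
    obtain ⟨e, heT, hxb⟩ := hstep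
    by_cases heA : e ∈ G.inducedEdges A
    · refine ⟨x, ?_, .refl⟩
      rcases hxb with hxb | hxb <;> simp_all [inducedEdges]
    · obtain ⟨a, ha, hba⟩ := ih
      exact ⟨a, ha, .head ⟨e, Finset.mem_sdiff.2 ⟨heT, heA⟩, hxb⟩ hba⟩

theorem IsSpanningTree.card_inducedEdges_inter_add_one_le {T : Finset G.E}
    (hT : G.IsSpanningTree T) {A : Finset G.V} (hA : A.Nonempty) :
    (G.inducedEdges A ∩ T).card + 1 ≤ A.card := by
  obtain ⟨a₀, ha₀⟩ := hA
  have hcount := card_le_card_add_card_of_forall_connectsVia ⟨a₀, ha₀⟩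
    fun x => exists_mem_connectsVia_sdiff_inducedEdges ha₀ (hT.1 x a₀)
  rw [Finset.card_sdiff] at hcount
  have hle := Finset.card_le_card (Finset.inter_subset_right (s₁ := G.inducedEdges A) (s₂ := T))
  have hTcard := hT.2
  omega

theorem IsTBreak.card_inducedEdges_sdiff_le_sum {T : Finset G.E} {D : G.V → ℤ}
    (hD : G.IsTBreak T D) (A : Finset G.V) :
    ((G.inducedEdges A \ T).card : ℤ) ≤ ∑ v ∈ A, D v := by
  obtain ⟨ch, hch, hD⟩ := hD
  have hmaps : ∀ e ∈ G.inducedEdges A \ T, ch e ∈ A := by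
    intro e he
    obtain ⟨heA, heT⟩ := Finset.mem_sdiff.1 he
    simp only [inducedEdges, Finset.mem_filter, Finset.mem_univ, true_and] at heA
    rcases hch e heT with h | h <;> rw [h]
    exacts [heA.1, heA.2]
  rw [Finset.card_eq_sum_card_fiberwise hmaps]
  push_cast
  gcongr with v
  rw [hD v]
  exact_mod_cast Finset.card_le_card fun e he => by simp_all

end

theorem tbreak_degree_on_connected_subset_general (G : Multigraph)
    (T : Finset G.E) (hT : G.IsSpanningTree T)
    (D : G.V → ℤ) (hD : G.IsTBreak T D)
    (A : Finset G.V) (hA : A.Nonempty) :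
    (∑ v ∈ A, D v) ≥ ((G.inducedEdges A).card : ℤ) - A.card + 1 := by
  have hforest := hT.card_inducedEdges_inter_add_one_le hA
  have hchips := hD.card_inducedEdges_sdiff_le_sum A
  have hsplit := Finset.card_inter_add_card_sdiff (G.inducedEdges A) T
  omega

/-- if `D` is a `T`-break divisor and `A` spans a connected
induced subgraph `H`, then `deg(D|_A) ≥ #E(H) - #A + 1`. -/
theorem tbreak_degree_on_connected_subset (G : Multigraph) (hG : G.Connected)
    (hl : G.Loopless) (T : Finset G.E) (hT : G.IsSpanningTree T)
    (D : G.V → ℤ) (hD : G.IsTBreak T D)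
    (A : Finset G.V) (hA : A.Nonempty)
    (hconn : ∀ x ∈ A, ∀ y ∈ A, G.ConnectsViaInduced A x y) :
    (∑ v ∈ A, D v) ≥ ((G.inducedEdges A).card : ℤ) - A.card + 1 :=
  tbreak_degree_on_connected_subset_general G T hT D hD A hA

end Multigraph
end
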